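/- (Correctness of the Sloppy MSO encoding for NNF.) Let φ be an LTLf formula in Negation Normal Form (negation is applied only to atoms) and ρ a finite trace. Then ρ ⊨ φ if and only if there exists a function Q assigning to every subformula θ of φ a set Q_θ of natural numbers such that: (i) for every atom p that is a subformula of φ, Q_p = {x : 0 ≤ x < |ρ| and p ∈ ρ[x]}; (ii) 0 ∈ Q_φ; and (iii) Q satisfies the sloppy MSO constraints for φ on ρ. -/
import Mathlib


/-- Syntax of LTLf formulas over a set `P` of atomic propositions. -/
inductive LTLf (P : Type) : Type where
  | tt : LTLf P
  | ff : LTLf P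
  | atom : P → LTLf P
  | not : LTLf P → LTLf P
  | and : LTLf P → LTLf P → LTLf P
  | or : LTLf P → LTLf P → LTLf P
  | next : LTLf P → LTLf P
  | wnext : LTLf P → LTLf P
  | until_ : LTLf P → LTLf P → LTLf P
  | release : LTLf P → LTLf P → LTLf P

/-- Satisfaction `ρ, x ⊨ φ` of an LTLf formula on a finite trace
`ρ : List (Set P)` at position `x`. -/
def LTLf.Sat {P : Type} (ρ : List (Set P)) : LTLf P → ℕ → Prop
  | .tt, _ => True
  | .ff, _ => False
  | .atom p, x => p ∈ ρ.getD x ∅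
  | .not φ, x => ¬ LTLf.Sat ρ φ x
  | .and φ₁ φ₂, x => LTLf.Sat ρ φ₁ x ∧ LTLf.Sat ρ φ₂ x
  | .or φ₁ φ₂, x => LTLf.Sat ρ φ₁ x ∨ LTLf.Sat ρ φ₂ x
  | .next φ, x => x + 1 < ρ.length ∧ LTLf.Sat ρ φ (x + 1)
  | .wnext φ, x => x + 1 = ρ.length ∨ LTLf.Sat ρ φ (x + 1)
  | .until_ φ₁ φ₂, x => ∃ y, x ≤ y ∧ y < ρ.length ∧ LTLf.Sat ρ φ₂ y ∧
      ∀ z, x ≤ z → z < y → LTLf.Sat ρ φ₁ z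
  | .release φ₁ φ₂, x => ∀ y, x ≤ y → y < ρ.length →
      (LTLf.Sat ρ φ₂ y ∨ ∃ z, x ≤ z ∧ z < y ∧ LTLf.Sat ρ φ₁ z)

/-- `Subf θ φ`: `θ` is a subformula of `φ`. -/
inductive Subf {P : Type} : LTLf P → LTLf P → Prop where
  | refl (φ : LTLf P) : Subf φ φ
  | not_ {θ φ : LTLf P} : Subf θ φ → Subf θ (.not φ)
  | and_left {θ φ₁ φ₂ : LTLf P} : Subf θ φ₁ → Subf θ (.and φ₁ φ₂)
  | and_right {θ φ₁ φ₂ : LTLf P} : Subf θ φ₂ → Subf θ (.and φ₁ φ₂)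
  | or_left {θ φ₁ φ₂ : LTLf P} : Subf θ φ₁ → Subf θ (.or φ₁ φ₂)
  | or_right {θ φ₁ φ₂ : LTLf P} : Subf θ φ₂ → Subf θ (.or φ₁ φ₂)
  | next_ {θ φ : LTLf P} : Subf θ φ → Subf θ (.next φ)
  | wnext_ {θ φ : LTLf P} : Subf θ φ → Subf θ (.wnext φ)
  | until_left {θ φ₁ φ₂ : LTLf P} : Subf θ φ₁ → Subf θ (.until_ φ₁ φ₂)
  | until_right {θ φ₁ φ₂ : LTLf P} : Subf θ φ₂ → Subf θ (.until_ φ₁ φ₂)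
  | release_left {θ φ₁ φ₂ : LTLf P} : Subf θ φ₁ → Subf θ (.release φ₁ φ₂)
  | release_right {θ φ₁ φ₂ : LTLf P} : Subf θ φ₂ → Subf θ (.release φ₁ φ₂)

/-- `φ` is in Negation Normal Form: negation occurs only in front of atoms. -/
inductive IsNNF {P : Type} : LTLf P → Prop where
  | tt : IsNNF .tt
  | ff : IsNNF .ff
  | atom (p : P) : IsNNF (.atom p)
  | natom (p : P) : IsNNF (.not (.atom p))
  | and {φ₁ φ₂ : LTLf P} : IsNNF φ₁ → IsNNF φ₂ → IsNNF (.and φ₁ φ₂)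
  | or {φ₁ φ₂ : LTLf P} : IsNNF φ₁ → IsNNF φ₂ → IsNNF (.or φ₁ φ₂)
  | next {φ : LTLf P} : IsNNF φ → IsNNF (.next φ)
  | wnext {φ : LTLf P} : IsNNF φ → IsNNF (.wnext φ)
  | until_ {φ₁ φ₂ : LTLf P} : IsNNF φ₁ → IsNNF φ₂ → IsNNF (.until_ φ₁ φ₂)
  | release {φ₁ φ₂ : LTLf P} : IsNNF φ₁ → IsNNF φ₂ → IsNNF (.release φ₁ φ₂)

/-- The sloppy (implication-only) MSO constraint for the subformula `θ` at
position `x`, relative to an assignment `Q`. -/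
def SloppyAt {P : Type} (ρ : List (Set P)) (Q : LTLf P → Set ℕ) :
    LTLf P → ℕ → Prop
  | .ff, x => x ∉ Q .ff
  | .not (.atom p), x => x ∈ Q (.not (.atom p)) → x ∉ Q (.atom p)
  | .and θj θk, x => x ∈ Q (.and θj θk) → (x ∈ Q θj ∧ x ∈ Q θk)
  | .or θj θk, x => x ∈ Q (.or θj θk) → (x ∈ Q θj ∨ x ∈ Q θk)
  | .next θj, x => x ∈ Q (.next θj) → (x + 1 < ρ.length ∧ x + 1 ∈ Q θj)
  | .wnext θj, x => x ∈ Q (.wnext θj) → (x + 1 = ρ.length ∨ x + 1 ∈ Q θj)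
  | .until_ θj θk, x => x ∈ Q (.until_ θj θk) →
      (x ∈ Q θk ∨ (x + 1 < ρ.length ∧ x ∈ Q θj ∧ x + 1 ∈ Q (.until_ θj θk)))
  | .release θj θk, x => x ∈ Q (.release θj θk) →
      (x ∈ Q θk ∧ (x + 1 = ρ.length ∨ x ∈ Q θj ∨ x + 1 ∈ Q (.release θj θk)))
  | _, _ => True

/-- `Q` satisfies the sloppy MSO constraints for `φ` on the trace `ρ`. -/
def SloppyConstraints {P : Type} (ρ : List (Set P)) (Q : LTLf P → Set ℕ)
    (φ : LTLf P) : Prop :=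
  ∀ θ : LTLf P, Subf θ φ → ∀ x : ℕ, x < ρ.length → SloppyAt ρ Q θ x

lemma Subf.trans' {P : Type} {a b c : LTLf P} (h1 : Subf a b) (h2 : Subf b c) :
    Subf a c := by
  induction h2 with
  | refl => exact h1
  | not_ _ ih => exact .not_ ih
  | and_left _ ih => exact .and_left ih
  | and_right _ ih => exact .and_right ih
  | or_left _ ih => exact .or_left ih
  | or_right _ ih => exact .or_right ih
  | next_ _ ih => exact .next_ ih
  | wnext_ _ ih => exact .wnext_ ih
  | until_left _ ih => exact .until_left ih
  | until_right _ ih => exact .until_right ih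
  | release_left _ ih => exact .release_left ih
  | release_right _ ih => exact .release_right ih

lemma canonical_sloppyAt {P : Type} (ρ : List (Set P)) (θ : LTLf P) (x : ℕ)
    (hx : x < ρ.length) :
    SloppyAt ρ (fun ψ => {x | x < ρ.length ∧ LTLf.Sat ρ ψ x}) θ x := by
  cases θ with
  | ff => simp only [SloppyAt, Set.mem_setOf_eq, LTLf.Sat]; tauto
  | not θ' =>
    cases θ' with
    | atom p =>
      simp only [SloppyAt, Set.mem_setOf_eq, LTLf.Sat]; tauto
    | _ => trivial
  | and θj θk => simp only [SloppyAt, Set.mem_setOf_eq, LTLf.Sat]; tauto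
  | or θj θk => simp only [SloppyAt, Set.mem_setOf_eq, LTLf.Sat]; tauto
  | next θj => simp only [SloppyAt, Set.mem_setOf_eq, LTLf.Sat]; tauto
  | wnext θj =>
    simp only [SloppyAt, Set.mem_setOf_eq, LTLf.Sat]
    rintro ⟨-, h | h⟩
    · exact Or.inl h
    · by_cases he : x + 1 = ρ.length
      · exact Or.inl he
      · exact Or.inr ⟨by omega, h⟩
  | until_ θj θk =>
    simp only [SloppyAt, Set.mem_setOf_eq, LTLf.Sat]
    rintro ⟨-, y, hxy, hylen, hk, hj⟩
    rcases eq_or_lt_of_le hxy with rfl | hlt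
    · exact Or.inl ⟨hx, hk⟩
    · refine Or.inr ⟨by omega, ⟨hx, hj x le_rfl hlt⟩, by omega,
        y, by omega, hylen, hk, fun z hz1 hz2 => hj z (by omega) hz2⟩
  | release θj θk =>
    simp only [SloppyAt, Set.mem_setOf_eq, LTLf.Sat]
    rintro ⟨-, h⟩
    have hk : LTLf.Sat ρ θk x := by
      rcases h x le_rfl hx with hk | ⟨z, hz1, hz2, -⟩
      · exact hk
      · omega
    refine ⟨⟨hx, hk⟩, ?_⟩
    by_cases he : x + 1 = ρ.length
    · exact Or.inl he
    by_cases hjx : LTLf.Sat ρ θj x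
    · exact Or.inr (Or.inl ⟨hx, hjx⟩)
    refine Or.inr (Or.inr ⟨by omega, fun y hy1 hy2 => ?_⟩)
    rcases h y (by omega) hy2 with hky | ⟨z, hz1, hz2, hzj⟩
    · exact Or.inl hky
    · have : x + 1 ≤ z := by
        rcases eq_or_lt_of_le hz1 with rfl | h'
        · exact absurd hzj hjx
        · omega
      exact Or.inr ⟨z, this, hz2, hzj⟩
  | _ => trivial

lemma sloppy_sound {P : Type} (ρ : List (Set P)) (Q : LTLf P → Set ℕ)
    (φ : LTLf P)
    (hA : ∀ p : P, Subf (.atom p) φ →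
      Q (.atom p) = {x | x < ρ.length ∧ p ∈ ρ.getD x ∅})
    (hC : SloppyConstraints ρ Q φ) :
    ∀ θ, IsNNF θ → Subf θ φ → ∀ x, x < ρ.length → x ∈ Q θ → LTLf.Sat ρ θ x := by
  intro θ hθ
  induction hθ with
  | tt => intro _ _ _ _; trivial
  | ff => intro hs x hx hxQ; exact absurd hxQ (hC _ hs x hx)
  | atom p =>
    intro hs x hx hxQ
    rw [hA p hs] at hxQ
    exact hxQ.2
  | natom p =>
    intro hs x hx hxQ
    have h1 := hC _ hs x hx hxQ
    intro hp
    exact h1 (by rw [hA p (Subf.trans' (.not_ (.refl _)) hs)]; exact ⟨hx, hp⟩)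
  | and h1 h2 ih1 ih2 =>
    intro hs x hx hxQ
    obtain ⟨ha, hb⟩ := hC _ hs x hx hxQ
    exact ⟨ih1 (Subf.trans' (.and_left (.refl _)) hs) x hx ha,
           ih2 (Subf.trans' (.and_right (.refl _)) hs) x hx hb⟩
  | or h1 h2 ih1 ih2 =>
    intro hs x hx hxQ
    rcases hC _ hs x hx hxQ with ha | hb
    · exact Or.inl (ih1 (Subf.trans' (.or_left (.refl _)) hs) x hx ha)
    · exact Or.inr (ih2 (Subf.trans' (.or_right (.refl _)) hs) x hx hb)
  | next h ih =>
    intro hs x hx hxQ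
    obtain ⟨h1, h2⟩ := hC _ hs x hx hxQ
    exact ⟨h1, ih (Subf.trans' (.next_ (.refl _)) hs) (x + 1) h1 h2⟩
  | wnext h ih =>
    intro hs x hx hxQ
    rcases hC _ hs x hx hxQ with he | hQ
    · exact Or.inl he
    · by_cases he : x + 1 = ρ.length
      · exact Or.inl he
      · exact Or.inr (ih (Subf.trans' (.wnext_ (.refl _)) hs) (x + 1)
          (by omega) hQ)
  | until_ h1 h2 ih1 ih2 =>
    rename_i θj θk
    intro hs
    have hsj : Subf θj φ := Subf.trans' (.until_left (.refl _)) hs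
    have hsk : Subf θk φ := Subf.trans' (.until_right (.refl _)) hs
    suffices H : ∀ k x, ρ.length - x ≤ k → x < ρ.length →
        x ∈ Q (.until_ θj θk) → LTLf.Sat ρ (.until_ θj θk) x by
      intro x hx hxQ; exact H _ x le_rfl hx hxQ
    intro k
    induction k with
    | zero => intro x h hx _; omega
    | succ k ihk =>
      intro x h hx hxQ
      rcases hC _ hs x hx hxQ with hk | ⟨ha, hb, hc⟩
      · exact ⟨x, le_rfl, hx, ih2 hsk x hx hk,
          fun z hz1 hz2 => absurd hz2 (by omega)⟩
      · obtain ⟨y, hy1, hy2, hy3, hy4⟩ := ihk (x + 1) (by omega) ha hc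
        refine ⟨y, by omega, hy2, hy3, fun z hz1 hz2 => ?_⟩
        rcases eq_or_lt_of_le hz1 with rfl | h'
        · exact ih1 hsj _ hx hb
        · exact hy4 z (by omega) hz2
  | release h1 h2 ih1 ih2 =>
    rename_i θj θk
    intro hs
    have hsj : Subf θj φ := Subf.trans' (.release_left (.refl _)) hs
    have hsk : Subf θk φ := Subf.trans' (.release_right (.refl _)) hs
    suffices H : ∀ k x, ρ.length - x ≤ k → x < ρ.length →
        x ∈ Q (.release θj θk) → LTLf.Sat ρ (.release θj θk) x by
      intro x hx hxQ; exact H _ x le_rfl hx hxQ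
    intro k
    induction k with
    | zero => intro x h hx _; omega
    | succ k ihk =>
      intro x h hx hxQ
      obtain ⟨hk, hrest⟩ := hC _ hs x hx hxQ
      intro y hy1 hy2
      rcases eq_or_lt_of_le hy1 with rfl | hlt
      · exact Or.inl (ih2 hsk _ hy2 hk)
      · rcases hrest with he | hj | hn
        · omega
        · exact Or.inr ⟨x, le_rfl, hlt, ih1 hsj x hx hj⟩
        · have hR := ihk (x + 1) (by omega) (by omega) hn
          rcases hR y (by omega) hy2 with hky | ⟨z, hz1, hz2, hz3⟩
          · exact Or.inl hky
          · exact Or.inr ⟨z, by omega, hz2, hz3⟩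

/-- Correctness of the Sloppy MSO encoding for formulas in NNF. -/
theorem sloppy_mso_encoding_correct {P : Type} (φ : LTLf P) (hφ : IsNNF φ)
    (ρ : List (Set P)) (hρ : ρ ≠ []) :
    LTLf.Sat ρ φ 0 ↔
      ∃ Q : LTLf P → Set ℕ,
        (∀ p : P, Subf (.atom p) φ →
          Q (.atom p) = {x | x < ρ.length ∧ p ∈ ρ.getD x ∅}) ∧
        0 ∈ Q φ ∧
        SloppyConstraints ρ Q φ := by
  constructor
  · intro h
    refine ⟨fun ψ => {x | x < ρ.length ∧ LTLf.Sat ρ ψ x}, fun p _ => rfl,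
      ⟨List.length_pos_iff.mpr hρ, h⟩, fun θ _ x hx => canonical_sloppyAt ρ θ x hx⟩
  · rintro ⟨Q, hA, h0, hC⟩
    exact sloppy_sound ρ Q φ hA hC φ hφ (.refl φ) 0 (List.length_pos_iff.mpr hρ) h0
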